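/- arXiv:0906.3377 — 6 statements merged into one kernel-verified Lean document; each statement's English description precedes it below -/
import Mathlib

section
/- Let G be a graph on vertices v_1,…,v_n, S a finite subgroup of O(d), Φ : S → Aut(G) a group homomorphism, and p a configuration satisfying M_x p_i = p_{Φ(x)(i)} for all x ∈ S and all i. If R(G,p) u = z, then for every x ∈ S, R(G,p) (H_e(x) u) = H_i(x) z, where H_e(x) is the dn×dn matrix obtained from the transpose of the permutation matrix of Φ(x) by replacing each 1 with M_x, and H_i(x) is the transpose of the permutation matrix that Φ(x) induces on the edge set E(G). -/
open Matrix

lemma dot_mulVec_orth {d : ℕ} (A : Matrix (Fin d) (Fin d) ℝ) (hA : Aᵀ * A = 1)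
    (v w : Fin d → ℝ) : (A *ᵥ v) ⬝ᵥ (A *ᵥ w) = v ⬝ᵥ w := by
  rw [Matrix.dotProduct_mulVec, ← Matrix.vecMul_transpose,
    Matrix.vecMul_vecMul, hA, Matrix.vecMul_one]

/-- equivariance of the rigidity matrix (Lemma 3.1 (i)):
if `R(G,p) u = z`, then `R(G,p) (H_e(x) u) = H_i(x) z` for every `x ∈ S`.
Here `(H_e(x) u)_i = M_x *ᵥ u (Φ(x)⁻¹ i)` and `(H_i(x) z)(e) = z (σ⁻¹ e)` with `σ`
the edge permutation induced by `Φ(x)`, which is exactly the action of the external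
(resp. internal) representation matrices on coordinate vectors. The equation
`R(G,p) v = w` is expressed row by row: the row of the edge `{v_i,v_j}` evaluated at
`v` equals the corresponding entry of `w`. -/
theorem rigidity_matrix_equivariance
    {d n : ℕ} (G : SimpleGraph (Fin n))
    {S : Type*} [Group S] [Finite S]
    (M : S →* Matrix (Fin d) (Fin d) ℝ)
    (hM : ∀ x : S, (M x)ᵀ * M x = 1)
    (Φ : S →* (G ≃g G))
    (p : Fin n → Fin d → ℝ)
    (hp : ∀ (x : S) (i : Fin n), M x *ᵥ p i = p (Φ x i))
    (u : Fin n → Fin d → ℝ) (z : G.edgeSet → ℝ)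
    (hz : ∀ (i j : Fin n) (hij : G.Adj i j),
      z ⟨s(i, j), G.mem_edgeSet.mpr hij⟩ = (p i - p j) ⬝ᵥ (u i - u j))
    (x : S) (i j : Fin n) (hij : G.Adj i j) :
    (p i - p j) ⬝ᵥ ((M x *ᵥ u ((Φ x).symm i)) - (M x *ᵥ u ((Φ x).symm j)))
      = z ((Φ x).mapEdgeSet.symm ⟨s(i, j), G.mem_edgeSet.mpr hij⟩) := by
  set i' := (Φ x).symm i with hi'
  set j' := (Φ x).symm j with hj'
  have hij' : G.Adj i' j' := (Φ x).symm.map_adj_iff.mpr hij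
  have he : (Φ x).mapEdgeSet.symm ⟨s(i, j), G.mem_edgeSet.mpr hij⟩
      = ⟨s(i', j'), G.mem_edgeSet.mpr hij'⟩ := by
    apply (Φ x).mapEdgeSet.injective
    rw [Equiv.apply_symm_apply]
    apply Subtype.ext
    simp [SimpleGraph.Iso.mapEdgeSet, SimpleGraph.Hom.mapEdgeSet, Sym2.map_pair_eq, i', j']
  rw [he, hz i' j' hij']
  have hpi : p i = M x *ᵥ p i' := by
    rw [hp x i']; simp [i']
  have hpj : p j = M x *ᵥ p j' := by
    rw [hp x j']; simp [j']
  rw [hpi, hpj, ← Matrix.mulVec_sub, ← Matrix.mulVec_sub,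
    dot_mulVec_orth (M x) (hM x), ]
end

section
/- Under the same hypotheses (S a finite subgroup of O(d), Φ : S → Aut(G) a homomorphism, configuration p satisfying M_x p_i = p_{Φ(x)(i)}), if R(G,p)^T ω = l then for every x ∈ S, R(G,p)^T (H_i(x) ω) = H_e(x) l. -/
open Matrix

/-- equivariance of the transpose of the rigidity matrix (Lemma 3.1 (ii)):
if `R(G,p)ᵀ ω = l`, then `R(G,p)ᵀ (H_i(x) ω) = H_e(x) l` for every `x ∈ S`.
The equation `R(G,p)ᵀ ω = l` is expressed row (vertex) by row:
`l_i = ∑_{j ~ i} ω({i,j}) (p_i - p_j)`; `(H_i(x) ω)(e) = ω(σ⁻¹ e)` and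
`(H_e(x) l)_i = M_x *ᵥ l (Φ(x)⁻¹ i)`. -/
theorem rigidity_matrix_transpose_equivariance
    {d n : ℕ} (G : SimpleGraph (Fin n)) [DecidableRel G.Adj]
    {S : Type*} [Group S] [Finite S]
    (M : S →* Matrix (Fin d) (Fin d) ℝ)
    (hM : ∀ x : S, (M x)ᵀ * M x = 1)
    (Φ : S →* (G ≃g G))
    (p : Fin n → Fin d → ℝ)
    (hp : ∀ (x : S) (i : Fin n), M x *ᵥ p i = p (Φ x i))
    (ω : G.edgeSet → ℝ) (l : Fin n → Fin d → ℝ)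
    (hl : ∀ i : Fin n,
      l i = ∑ j : Fin n,
        if hij : G.Adj i j then ω ⟨s(i, j), G.mem_edgeSet.mpr hij⟩ • (p i - p j) else 0)
    (x : S) (i : Fin n) :
    (∑ j : Fin n,
        if hij : G.Adj i j then
          ω ((Φ x).mapEdgeSet.symm ⟨s(i, j), G.mem_edgeSet.mpr hij⟩) • (p i - p j)
        else 0)
      = M x *ᵥ l ((Φ x).symm i) := by
  rw [hl]
  have hsum : M x *ᵥ (∑ j : Fin n,
      if hij : G.Adj ((Φ x).symm i) j then
        ω ⟨s((Φ x).symm i, j), G.mem_edgeSet.mpr hij⟩ • (p ((Φ x).symm i) - p j) else 0)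
      = ∑ j : Fin n, M x *ᵥ (if hij : G.Adj ((Φ x).symm i) j then
        ω ⟨s((Φ x).symm i, j), G.mem_edgeSet.mpr hij⟩ • (p ((Φ x).symm i) - p j) else 0) := by
    exact map_sum (Matrix.mulVecLin (M x))
      (fun j : Fin n => if hij : G.Adj ((Φ x).symm i) j then
        ω ⟨s((Φ x).symm i, j), G.mem_edgeSet.mpr hij⟩ • (p ((Φ x).symm i) - p j) else 0)
      Finset.univ
  rw [hsum]
  refine Fintype.sum_equiv ((Φ x).toEquiv.symm)
    (fun j => if hij : G.Adj i j then
          ω ((Φ x).mapEdgeSet.symm ⟨s(i, j), G.mem_edgeSet.mpr hij⟩) • (p i - p j)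
        else 0)
    (fun j => M x *ᵥ (if hij : G.Adj ((Φ x).symm i) j then
        ω ⟨s((Φ x).symm i, j), G.mem_edgeSet.mpr hij⟩ • (p ((Φ x).symm i) - p j) else 0))
    (fun j => ?_)
  show (if hij : G.Adj i j then
          ω ((Φ x).mapEdgeSet.symm ⟨s(i, j), G.mem_edgeSet.mpr hij⟩) • (p i - p j)
        else 0)
      = M x *ᵥ (if hij : G.Adj ((Φ x).symm i) ((Φ x).symm j) then
      ω ⟨s((Φ x).symm i, (Φ x).symm j), G.mem_edgeSet.mpr hij⟩
        • (p ((Φ x).symm i) - p ((Φ x).symm j)) else 0)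
  by_cases hij : G.Adj i j
  · have hadj : G.Adj ((Φ x).symm i) ((Φ x).symm j) := ((Φ x).symm).map_adj_iff.mpr hij
    rw [dif_pos hij, dif_pos hadj]
    have hedge : (Φ x).mapEdgeSet.symm ⟨s(i, j), G.mem_edgeSet.mpr hij⟩
        = ⟨s((Φ x).symm i, (Φ x).symm j), G.mem_edgeSet.mpr hadj⟩ := by
      apply Subtype.ext
      simp [SimpleGraph.Iso.mapEdgeSet, SimpleGraph.Hom.mapEdgeSet, Sym2.map_pair_eq]
    rw [hedge, Matrix.mulVec_smul, Matrix.mulVec_sub, hp, hp]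
    simp
  · have hadj : ¬ G.Adj ((Φ x).symm i) ((Φ x).symm j) := fun h =>
      hij (((Φ x).symm).map_adj_iff.mp h)
    rw [dif_neg hij, dif_neg hadj, Matrix.mulVec_zero]
end

section
/- With S, Φ, p as in the symmetric framework setting, the kernel N of the rigidity matrix R(K_n, p) of the complete graph on the vertex set is invariant under H_e(x) for every x ∈ S, i.e., u ∈ N implies H_e(x) u ∈ N. -/
open Matrix

/-- the kernel `N` of the rigidity matrix `R(K_n, p)` of the complete
graph (i.e. the space of infinitesimal rigid motions, described row by row as
`(p_i - p_j) ⋅ (u_i - u_j) = 0` for all `i, j`) is invariant under the external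
representation: `u ∈ N` implies `H_e(x) u ∈ N`, where
`(H_e(x) u)_i = M_x *ᵥ u (Φ(x)⁻¹ i)`. -/
theorem rigid_motions_invariant
    {d n : ℕ} {S : Type*} [Group S] [Finite S]
    (M : S →* Matrix (Fin d) (Fin d) ℝ)
    (hM : ∀ x : S, (M x)ᵀ * M x = 1)
    (Φ : S →* Equiv.Perm (Fin n))
    (p : Fin n → Fin d → ℝ)
    (hp : ∀ (x : S) (i : Fin n), M x *ᵥ p i = p (Φ x i))
    (u : Fin n → Fin d → ℝ)
    (hu : ∀ i j : Fin n, (p i - p j) ⬝ᵥ (u i - u j) = 0)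
    (x : S) :
    ∀ i j : Fin n,
      (p i - p j) ⬝ᵥ ((M x *ᵥ u ((Φ x)⁻¹ i)) - (M x *ᵥ u ((Φ x)⁻¹ j))) = 0 := by
  intro i j
  have hpi : p i = M x *ᵥ p ((Φ x)⁻¹ i) := by
    rw [hp x ((Φ x)⁻¹ i)]
    simp
  have hpj : p j = M x *ᵥ p ((Φ x)⁻¹ j) := by
    rw [hp x ((Φ x)⁻¹ j)]
    simp
  rw [hpi, hpj, ← Matrix.mulVec_sub, ← Matrix.mulVec_sub,
    Matrix.dotProduct_mulVec, Matrix.vecMul_mulVec, hM, Matrix.vecMul_one]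
  exact hu _ _
end

section
/- With the same hypotheses, if R(G,p)^T ω = l and ω lies in the isotypic component V_i^{(I_t)} of the internal representation, then l lies in the isotypic component V_e^{(I_t)} of the external representation. -/
open Matrix

/-- A submodule `U` is invariant under the representation `ρ`. -/
def RepInvariant {S V : Type*} [Monoid S] [AddCommGroup V] [Module ℝ V]
    (ρ : Representation ℝ S V) (U : Submodule ℝ V) : Prop :=
  ∀ x : S, ∀ v ∈ U, ρ x v ∈ U

/-- The subrepresentation of `ρ` on an invariant submodule `U`. -/
def repSubRep {S V : Type*} [Monoid S] [AddCommGroup V] [Module ℝ V]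
    (ρ : Representation ℝ S V) (U : Submodule ℝ V) (h : RepInvariant ρ U) :
    Representation ℝ S U where
  toFun x := (ρ x).restrict (h x)
  map_one' := by
    ext v
    simp [LinearMap.restrict_apply]
  map_mul' x y := by
    ext v
    simp [LinearMap.restrict_apply]

/-- Equivalence of two representations. -/
def RepEquiv {S V W : Type*} [Monoid S] [AddCommGroup V] [Module ℝ V]
    [AddCommGroup W] [Module ℝ W]
    (ρ : Representation ℝ S V) (τ : Representation ℝ S W) : Prop :=
  ∃ e : V ≃ₗ[ℝ] W, ∀ (x : S) (v : V), e (ρ x v) = τ x (e v)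

/-- A representation is irreducible if its space is nonzero and its only invariant
submodules are `⊥` and `⊤`. -/
def RepIrreducible {S W : Type*} [Monoid S] [AddCommGroup W] [Module ℝ W]
    (τ : Representation ℝ S W) : Prop :=
  (⊥ : Submodule ℝ W) ≠ ⊤ ∧
    ∀ U : Submodule ℝ W, RepInvariant τ U → U = ⊥ ∨ U = ⊤

/-- The isotypic component of `ρ` corresponding to the (irreducible) representation `τ`:
the sum of all invariant submodules on which the subrepresentation is equivalent to `τ`. -/
def isotypic {S V W : Type*} [Monoid S] [AddCommGroup V] [Module ℝ V]
    [AddCommGroup W] [Module ℝ W]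
    (ρ : Representation ℝ S V) (τ : Representation ℝ S W) : Submodule ℝ V :=
  sSup {U : Submodule ℝ V | ∃ h : RepInvariant ρ U, RepEquiv (repSubRep ρ U h) τ}

theorem map_isotypic_le {S V V' W : Type*} [Monoid S]
    [AddCommGroup V] [Module ℝ V] [AddCommGroup V'] [Module ℝ V']
    [AddCommGroup W] [Module ℝ W]
    (ρ : Representation ℝ S V) (ρ' : Representation ℝ S V')
    (I : Representation ℝ S W) (hI : RepIrreducible I)
    (f : V →ₗ[ℝ] V') (hf : ∀ x v, f (ρ x v) = ρ' x (f v)) :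
    Submodule.map f (isotypic ρ I) ≤ isotypic ρ' I := by
  rw [isotypic, (Submodule.gc_map_comap f).l_sSup]
  apply iSup₂_le
  rintro U ⟨hU, e, he⟩
  -- the image submodule
  have hU' : RepInvariant ρ' (Submodule.map f U) := by
    rintro x _ ⟨v, hv, rfl⟩
    exact ⟨ρ x v, hU x v hv, hf x v⟩
  -- kernel of f restricted to U, as a submodule of W via e
  set K : Submodule ℝ U := LinearMap.ker (f.comp U.subtype) with hK
  have hKinv : ∀ x : S, ∀ u ∈ K, (repSubRep ρ U hU) x u ∈ K := by
    intro x u hu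
    simp only [K, LinearMap.mem_ker, LinearMap.comp_apply, Submodule.subtype_apply] at hu ⊢
    have h1 : ((repSubRep ρ U hU) x u : V) = ρ x (u : V) := rfl
    rw [h1, hf, hu, map_zero]
  have hKW : RepInvariant I (Submodule.map e.toLinearMap K) := by
    rintro x _ ⟨u, hu, rfl⟩
    refine ⟨(repSubRep ρ U hU) x u, hKinv x u hu, ?_⟩
    simpa using he x u
  rcases hI.2 _ hKW with h0 | htop
  · -- K = ⊥ : f injective on U, image subrep ≅ I
    have hK0 : K = ⊥ := by
      rw [eq_bot_iff]
      intro u hu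
      have : e u ∈ Submodule.map e.toLinearMap K := ⟨u, hu, rfl⟩
      rw [h0, Submodule.mem_bot] at this
      have : e u = 0 := this
      simpa using e.injective (by simpa using this)
    have hinj : Function.Injective (f.comp U.subtype) := by
      rw [← LinearMap.ker_eq_bot]; exact hK0
    -- linear equiv U ≃ map f U
    have hrange : LinearMap.range (f.comp U.subtype) = Submodule.map f U := by
      rw [LinearMap.range_comp, Submodule.range_subtype]
    let g : U ≃ₗ[ℝ] Submodule.map f U :=
      (LinearEquiv.ofInjective (f.comp U.subtype) hinj).trans
        (LinearEquiv.ofEq _ _ hrange)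
    have hg : ∀ u : U, (g u : V') = f (u : V) := fun u => rfl
    apply le_sSup
    refine ⟨hU', g.symm.trans e, ?_⟩
    intro x v'
    obtain ⟨u, rfl⟩ := g.surjective v'
    have h1 : (repSubRep ρ' (Submodule.map f U) hU') x (g u) = g ((repSubRep ρ U hU) x u) := by
      apply Subtype.ext
      show ρ' x ((g u : V')) = (g ((repSubRep ρ U hU) x u) : V')
      rw [hg, hg, ← hf]
      rfl
    rw [h1]
    simp only [LinearEquiv.trans_apply, LinearEquiv.symm_apply_apply]
    exact he x u
  · -- K = ⊤ : f vanishes on U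
    have hKtop : K = ⊤ := by
      rw [eq_top_iff]
      intro u _
      have : e u ∈ Submodule.map e.toLinearMap K := htop ▸ Submodule.mem_top
      obtain ⟨k, hk, hek⟩ := this
      have : k = u := e.injective (by simpa using hek)
      exact this ▸ hk
    have : Submodule.map f U = ⊥ := by
      rw [Submodule.eq_bot_iff]
      rintro _ ⟨v, hv, rfl⟩
      have : (⟨v, hv⟩ : U) ∈ K := hKtop ▸ Submodule.mem_top
      simpa [K, LinearMap.mem_ker] using this
    rw [this]
    exact bot_le

/-- if `R(G,p)ᵀ ω = l` and `ω` lies in the isotypic component of the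
internal representation corresponding to an irreducible real representation `I_t` of
`S`, then `l` lies in the isotypic component of the external representation
corresponding to `I_t`. -/
theorem rigidity_transpose_preserves_isotypic
    {d n : ℕ} (G : SimpleGraph (Fin n)) [DecidableRel G.Adj] [Fintype G.edgeSet]
    {S : Type*} [Group S] [Finite S]
    (M : S →* Matrix (Fin d) (Fin d) ℝ)
    (hM : ∀ x : S, (M x)ᵀ * M x = 1)
    (Φ : S →* (G ≃g G))
    (p : Fin n → Fin d → ℝ)
    (hp : ∀ (x : S) (i : Fin n), M x *ᵥ p i = p (Φ x i))
    (ρe : Representation ℝ S (Fin n → Fin d → ℝ))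
    (hρe : ∀ (x : S) (u : Fin n → Fin d → ℝ) (i : Fin n),
      ρe x u i = M x *ᵥ u ((Φ x).symm i))
    (ρi : Representation ℝ S (G.edgeSet → ℝ))
    (hρi : ∀ (x : S) (z : G.edgeSet → ℝ) (e : G.edgeSet),
      ρi x z e = z ((Φ x).mapEdgeSet.symm e))
    (RT : (G.edgeSet → ℝ) →ₗ[ℝ] (Fin n → Fin d → ℝ))
    (hRT : ∀ (ω : G.edgeSet → ℝ) (i : Fin n),
      RT ω i = ∑ j : Fin n,
        if hij : G.Adj i j then ω ⟨s(i, j), G.mem_edgeSet.mpr hij⟩ • (p i - p j) else 0)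
    {W : Type*} [AddCommGroup W] [Module ℝ W] [FiniteDimensional ℝ W]
    (I : Representation ℝ S W) (hI : RepIrreducible I)
    (ω : G.edgeSet → ℝ) (l : Fin n → Fin d → ℝ)
    (hωl : RT ω = l)
    (hω : ω ∈ isotypic ρi I) :
    l ∈ isotypic ρe I := by
  have hequiv : ∀ (x : S) (z : G.edgeSet → ℝ), RT (ρi x z) = ρe x (RT z) := by
    intro x z
    funext i
    rw [hRT, hρe, hRT]
    have hmv : ∀ v : Fin d → ℝ, M x *ᵥ v = (M x).mulVecLin v := fun _ => rfl
    rw [hmv, map_sum]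
    refine Fintype.sum_equiv (Φ x).symm.toEquiv _ _ fun j => ?_
    simp only [RelIso.coe_fn_toEquiv]
    by_cases hij : G.Adj i j
    · have hij' : G.Adj ((Φ x).symm i) ((Φ x).symm j) := (Φ x).symm.map_adj_iff.mpr hij
      rw [dif_pos hij, dif_pos hij']
      have hedge : (Φ x).mapEdgeSet.symm ⟨s(i, j), G.mem_edgeSet.mpr hij⟩ =
          ⟨s((Φ x).symm i, (Φ x).symm j), G.mem_edgeSet.mpr hij'⟩ := by
        apply Subtype.ext
        simp [SimpleGraph.Iso.mapEdgeSet, SimpleGraph.Hom.mapEdgeSet, Sym2.map_pair_eq]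
      rw [hρi, hedge, _root_.map_smul, map_sub]
      rw [← hmv, ← hmv, hp, hp]
      simp
    · have hij' : ¬ G.Adj ((Φ x).symm i) ((Φ x).symm j) :=
        fun h => hij ((Φ x).symm.map_adj_iff.mp h)
      rw [dif_neg hij, dif_neg hij', map_zero]
  have hmem : l ∈ Submodule.map RT (isotypic ρi I) := ⟨ω, hω, hωl⟩
  exact map_isotypic_le ρi ρe I hI RT hequiv hmem
end

section
/- Let (G,p) be an isostatic framework in ℝ^d (i.e., R(G,p) has trivial kernel modulo infinitesimal rigid motions and its rows are linearly independent) whose joints affinely span ℝ^d, symmetric with respect to a finite group S via a homomorphism Φ. Write ℝ^{dn} = Q ⊕ T ⊕ R as H_e-invariant subspaces where T ⊕ R = ker R(K_n,p) is the space of infinitesimal rigid motions. Then for every irreducible real representation I_t of S, dim(Q^{(I_t)}) = dim(V_i^{(I_t)}), where Q^{(I_t)} is the I_t-isotypic component of Q and V_i^{(I_t)} that of ℝ^m under the internal representation. -/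
open Matrix


section Aux
variable {S V X W : Type*} [Monoid S] [AddCommGroup V] [Module ℝ V]
  [AddCommGroup X] [Module ℝ X] [AddCommGroup W] [Module ℝ W]
  (ρ : Representation ℝ S V) (τ : Representation ℝ S X) (I : Representation ℝ S W)

lemma map_invariant (e : V ≃ₗ[ℝ] X) (he : ∀ (x : S) (v : V), e (ρ x v) = τ x (e v))
    (U : Submodule ℝ V) (hU : RepInvariant ρ U) :
    RepInvariant τ (U.map (e : V →ₗ[ℝ] X)) := by
  rintro x w ⟨v, hv, rfl⟩
  exact ⟨ρ x v, hU x v hv, (he x v)⟩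

lemma map_le_isotypic (e : V ≃ₗ[ℝ] X) (he : ∀ (x : S) (v : V), e (ρ x v) = τ x (e v)) :
    (isotypic ρ I).map (e : V →ₗ[ℝ] X) ≤ isotypic τ I := by
  rw [Submodule.map_le_iff_le_comap]
  apply sSup_le
  rintro U ⟨hU, f, hf⟩
  rw [← Submodule.map_le_iff_le_comap]
  apply le_sSup
  refine ⟨map_invariant ρ τ e he U hU, (e.submoduleMap U).symm.trans f, ?_⟩
  intro x w
  have h1 : ((e.submoduleMap U).symm ((repSubRep τ _ (map_invariant ρ τ e he U hU)) x w) : V)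
      = ((repSubRep ρ U hU) x ((e.submoduleMap U).symm w) : V) := by
    show e.symm (τ x (w : X)) = ρ x ((e.submoduleMap U).symm w : V)
    have h2 : ((e.submoduleMap U).symm w : V) = e.symm (w : X) := rfl
    rw [h2]
    apply e.injective
    rw [he]
    simp
  calc ((e.submoduleMap U).symm.trans f) ((repSubRep τ _ _) x w)
      = f ((e.submoduleMap U).symm ((repSubRep τ _ _) x w)) := rfl
    _ = f ((repSubRep ρ U hU) x ((e.submoduleMap U).symm w)) := by
        congr 1; exact Subtype.ext h1
    _ = I x (f ((e.submoduleMap U).symm w)) := hf x _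
    _ = I x (((e.submoduleMap U).symm.trans f) w) := rfl

lemma isotypic_map_eq (e : V ≃ₗ[ℝ] X) (he : ∀ (x : S) (v : V), e (ρ x v) = τ x (e v)) :
    (isotypic ρ I).map (e : V →ₗ[ℝ] X) = isotypic τ I := by
  refine le_antisymm (map_le_isotypic ρ τ I e he) ?_
  have he' : ∀ (x : S) (w : X), e.symm (τ x w) = ρ x (e.symm w) := by
    intro x w
    apply e.injective
    rw [he]
    simp
  have := map_le_isotypic τ ρ I e.symm he'
  intro w hw
  have : e.symm w ∈ isotypic ρ I := this ⟨w, hw, rfl⟩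
  exact ⟨e.symm w, this, by simp⟩

lemma isotypic_finrank_eq (e : V ≃ₗ[ℝ] X) (he : ∀ (x : S) (v : V), e (ρ x v) = τ x (e v)) :
    Module.finrank ℝ (isotypic ρ I) = Module.finrank ℝ (isotypic τ I) := by
  rw [← isotypic_map_eq ρ τ I e he, LinearEquiv.finrank_map_eq]

end Aux

/-- Theorem 4.3: for an isostatic symmetric framework whose joints
affinely span `ℝ^d`, the dimension of the `I_t`-isotypic component of the
`H_e`-invariant complement `Q` of the space `N` of infinitesimal rigid motions equals
the dimension of the `I_t`-isotypic component of the internal representation, for every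
irreducible real representation `I_t` of `S`. Isostatic is encoded as:
`ker R(G,p) = N = ker R(K_n,p)` and the rows of `R(G,p)` are independent, i.e. `R(G,p)`
is surjective. -/
theorem isostatic_isotypic_dimensions_eq
    {d n : ℕ} (G : SimpleGraph (Fin n)) [Fintype G.edgeSet]
    {S : Type*} [Group S] [Finite S]
    (M : S →* Matrix (Fin d) (Fin d) ℝ)
    (hM : ∀ x : S, (M x)ᵀ * M x = 1)
    (Φ : S →* (G ≃g G))
    (p : Fin n → Fin d → ℝ)
    (hp : ∀ (x : S) (i : Fin n), M x *ᵥ p i = p (Φ x i))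
    (hspan : affineSpan ℝ (Set.range p) = ⊤)
    (ρe : Representation ℝ S (Fin n → Fin d → ℝ))
    (hρe : ∀ (x : S) (u : Fin n → Fin d → ℝ) (i : Fin n),
      ρe x u i = M x *ᵥ u ((Φ x).symm i))
    (ρi : Representation ℝ S (G.edgeSet → ℝ))
    (hρi : ∀ (x : S) (z : G.edgeSet → ℝ) (e : G.edgeSet),
      ρi x z e = z ((Φ x).mapEdgeSet.symm e))
    (Rmap : (Fin n → Fin d → ℝ) →ₗ[ℝ] (G.edgeSet → ℝ))
    (hR : ∀ (u : Fin n → Fin d → ℝ) (i j : Fin n) (hij : G.Adj i j),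
      Rmap u ⟨s(i, j), G.mem_edgeSet.mpr hij⟩ = (p i - p j) ⬝ᵥ (u i - u j))
    -- `N` is the space of infinitesimal rigid motions, the kernel of `R(K_n, p)`:
    (N : Submodule ℝ (Fin n → Fin d → ℝ))
    (hN : ∀ u, u ∈ N ↔ ∀ i j : Fin n, (p i - p j) ⬝ᵥ (u i - u j) = 0)
    -- isostatic:
    (hker : LinearMap.ker Rmap = N)
    (hsurj : Function.Surjective Rmap)
    -- `Q` is an `H_e`-invariant complement of `N`:
    (Q : Submodule ℝ (Fin n → Fin d → ℝ))
    (hQinv : RepInvariant ρe Q)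
    (hQN : IsCompl Q N)
    {W : Type*} [AddCommGroup W] [Module ℝ W] [FiniteDimensional ℝ W]
    (I : Representation ℝ S W) (hI : RepIrreducible I) :
    Module.finrank ℝ (isotypic (repSubRep ρe Q hQinv) I) =
      Module.finrank ℝ (isotypic ρi I) := by


  -- orthogonality
  have horth : ∀ (x : S) (a b : Fin d → ℝ), (M x *ᵥ a) ⬝ᵥ (M x *ᵥ b) = a ⬝ᵥ b := by
    intro x a b
    calc (M x *ᵥ a) ⬝ᵥ (M x *ᵥ b) = (a ᵥ* (M x)ᵀ) ⬝ᵥ (M x *ᵥ b) := by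
          rw [Matrix.vecMul_transpose]
      _ = a ⬝ᵥ ((M x)ᵀ *ᵥ (M x *ᵥ b)) := (Matrix.dotProduct_mulVec _ _ _).symm
      _ = a ⬝ᵥ b := by rw [Matrix.mulVec_mulVec, hM, Matrix.one_mulVec]
  -- intertwining of the ambient representations
  have hint : ∀ (x : S) (u : Fin n → Fin d → ℝ), Rmap (ρe x u) = ρi x (Rmap u) := by
    intro x u
    funext e
    obtain ⟨e, he⟩ := e
    induction e using Sym2.ind with
    | _ i j =>
      have hij : G.Adj i j := G.mem_edgeSet.mp he
      have hadj' : G.Adj ((Φ x).symm i) ((Φ x).symm j) := ((Φ x).symm.map_adj_iff).mpr hij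
      have hedge : (Φ x).mapEdgeSet.symm ⟨s(i, j), he⟩ =
          ⟨s((Φ x).symm i, (Φ x).symm j), G.mem_edgeSet.mpr hadj'⟩ := by
        apply Subtype.ext
        simp [SimpleGraph.Iso.mapEdgeSet, SimpleGraph.Hom.mapEdgeSet, Sym2.map_pair_eq]
      have hL : Rmap (ρe x u) ⟨s(i, j), he⟩ = (p i - p j) ⬝ᵥ (ρe x u i - ρe x u j) :=
        hR (ρe x u) i j hij
      have hRside : ρi x (Rmap u) ⟨s(i, j), he⟩ =
          (p ((Φ x).symm i) - p ((Φ x).symm j)) ⬝ᵥ (u ((Φ x).symm i) - u ((Φ x).symm j)) := by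
        rw [hρi, hedge]
        exact hR u _ _ hadj'
      rw [hL, hRside, hρe, hρe]
      have hpi : p i = M x *ᵥ p ((Φ x).symm i) := by rw [hp]; simp
      have hpj : p j = M x *ᵥ p ((Φ x).symm j) := by rw [hp]; simp
      rw [hpi, hpj, ← Matrix.mulVec_sub, ← Matrix.mulVec_sub, horth]
  -- the linear equivalence `Q ≃ ℝ^m`
  have hbij : Function.Bijective (Rmap.comp Q.subtype) := by
    constructor
    · intro a b hab
      have hmem : ((a : Fin n → Fin d → ℝ) - b) ∈ N := by
        rw [← hker, LinearMap.mem_ker, map_sub, sub_eq_zero]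
        exact hab
      have hQmem : ((a : Fin n → Fin d → ℝ) - b) ∈ Q := sub_mem a.2 b.2
      have : ((a : Fin n → Fin d → ℝ) - b) = 0 :=
        (Submodule.disjoint_def.mp hQN.disjoint) _ hQmem hmem
      exact Subtype.ext (sub_eq_zero.mp this)
    · intro z
      obtain ⟨u, hu⟩ := hsurj z
      have hmem : u ∈ Q ⊔ N := by rw [hQN.sup_eq_top]; trivial
      obtain ⟨q, hq, nv, hn, rfl⟩ := Submodule.mem_sup.mp hmem
      refine ⟨⟨q, hq⟩, ?_⟩
      have hnv : Rmap nv = 0 := by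
        rw [← LinearMap.mem_ker, hker] at *
        exact hn
      have : Rmap q = z := by rw [← hu, map_add, hnv, add_zero]
      simpa using this
  let eqv : Q ≃ₗ[ℝ] (G.edgeSet → ℝ) := LinearEquiv.ofBijective (Rmap.comp Q.subtype) hbij
  have hintsub : ∀ (x : S) (v : Q), eqv ((repSubRep ρe Q hQinv) x v) = ρi x (eqv v) := by
    intro x v
    show Rmap (ρe x (v : Fin n → Fin d → ℝ)) = ρi x (Rmap (v : Fin n → Fin d → ℝ))
    exact hint x v
  exact isotypic_finrank_eq _ _ I eqv hintsub
end

section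
/- (Symmetry-extended Maxwell rule) Let (G,p) be an isostatic framework in ℝ^d whose joints affinely span ℝ^d, realized symmetrically with respect to a finite subgroup S of O(d) via a homomorphism Φ : S → Aut(G). Then for every x ∈ S: j_{Φ(x)} · Tr(M_x) − Tr(M_x) − χ_R(x) = b_{Φ(x)}, where χ_R(x) is the trace of the action of H_e(x) on the space R of rotational infinitesimal rigid motions. -/
open Matrix

set_option synthInstance.maxHeartbeats 1000000
set_option maxHeartbeats 1000000

open Matrix LinearMap



section TraceLemmas
variable {V W : Type*} [AddCommGroup V] [Module ℝ V] [FiniteDimensional ℝ V]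
  [AddCommGroup W] [Module ℝ W] [FiniteDimensional ℝ W]

lemma trace_prod_decomp (g : (V × W) →ₗ[ℝ] (V × W)) :
    trace ℝ (V × W) g = trace ℝ V ((fst ℝ V W ∘ₗ g) ∘ₗ inl ℝ V W)
      + trace ℝ W ((snd ℝ V W ∘ₗ g) ∘ₗ inr ℝ V W) := by
  have hg : g = (inl ℝ V W ∘ₗ (fst ℝ V W ∘ₗ g)) + (inr ℝ V W ∘ₗ (snd ℝ V W ∘ₗ g)) := by
    ext v <;> simp
  calc trace ℝ (V × W) g
      = trace ℝ (V × W) ((inl ℝ V W ∘ₗ (fst ℝ V W ∘ₗ g)) + (inr ℝ V W ∘ₗ (snd ℝ V W ∘ₗ g))) := by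
        rw [← hg]
    _ = trace ℝ (V × W) (inl ℝ V W ∘ₗ (fst ℝ V W ∘ₗ g))
        + trace ℝ (V × W) (inr ℝ V W ∘ₗ (snd ℝ V W ∘ₗ g)) := map_add _ _ _
    _ = _ := by rw [trace_comp_comm' (fst ℝ V W ∘ₗ g) (inl ℝ V W),
        trace_comp_comm' (snd ℝ V W ∘ₗ g) (inr ℝ V W)]

lemma trace_restrict_add_mapQ (f : V →ₗ[ℝ] V) (U : Submodule ℝ V)
    (hU : ∀ v ∈ U, f v ∈ U) :
    trace ℝ V f = trace ℝ U (f.restrict hU)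
      + trace ℝ (V ⧸ U) (U.mapQ U f (fun v hv => hU v hv)) := by
  obtain ⟨W, hW⟩ := Submodule.exists_isCompl U
  set e := Submodule.prodEquivOfIsCompl U W hW with he_def
  set q := Submodule.quotientEquivOfIsCompl U W hW with hq_def
  set g := e.symm.conj f with hg_def
  rw [← trace_conj' f e.symm, trace_prod_decomp]
  have key1 : (fst ℝ U W ∘ₗ g) ∘ₗ inl ℝ U W = f.restrict hU := by
    ext u
    have happ : g ((u, 0) : U × W) = e.symm (f (e ((u,0) : U × W))) := by
      simp [hg_def, LinearEquiv.conj_apply]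
    have he1 : e ((u, 0) : U × W) = (u : V) := by
      rw [Submodule.coe_prodEquivOfIsCompl']; simp
    have h1 : e.symm (f (u : V)) = ((⟨f u, hU u u.2⟩ : U), (0 : W)) :=
      Submodule.prodEquivOfIsCompl_symm_apply_left U W hW (⟨f u, hU u u.2⟩ : U)
    show ((g ((u,0) : U × W)).1 : V) = _
    rw [happ, he1, h1]
    rfl
  have key2 : (snd ℝ U W ∘ₗ g) ∘ₗ inr ℝ U W
      = q.conj (U.mapQ U f (fun v hv => hU v hv)) := by
    apply LinearMap.ext
    intro w
    apply q.symm.injective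
    have hq : ∀ v : W, q.symm v = Submodule.Quotient.mk (v : V) :=
      fun v => Submodule.quotientEquivOfIsCompl_symm_apply U W hW v
    rw [LinearEquiv.conj_apply]
    simp only [coe_comp, Function.comp_apply, LinearEquiv.coe_coe, LinearEquiv.symm_apply_apply]
    rw [hq w, Submodule.mapQ_apply]
    have happ : g ((0, w) : U × W) = e.symm (f (e ((0,w) : U × W))) := by
      simp [hg_def, LinearEquiv.conj_apply]
    have he1 : e ((0, w) : U × W) = (w : V) := by
      rw [Submodule.coe_prodEquivOfIsCompl']; simp
    rw [show ((g (inr ℝ U W w) : U × W)) = g ((0,w) : U × W) from rfl, happ, he1, hq]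
    rw [Submodule.Quotient.eq]
    show ((e.symm (f (w:V))).2 : V) - f (w:V) ∈ U
    set z := e.symm (f (w:V)) with hz
    have hsum : (z.1 : V) + (z.2 : V) = f (w:V) := by
      have := Submodule.coe_prodEquivOfIsCompl' U W hW z
      rw [hz, LinearEquiv.apply_symm_apply] at this
      exact this.symm
    rw [← hsum]
    have hd : (z.2 : V) - ((z.1 : V) + (z.2 : V)) = -(z.1 : V) := by abel
    rw [hd]
    exact U.neg_mem z.1.2
  rw [key1, key2, LinearMap.trace_conj']

end TraceLemmas

lemma trace_mulVecLin {d : ℕ} (A : Matrix (Fin d) (Fin d) ℝ) :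
    trace ℝ (Fin d → ℝ) A.mulVecLin = A.trace := by
  rw [trace_eq_matrix_trace ℝ (Pi.basisFun ℝ (Fin d)), LinearMap.toMatrix_eq_toMatrix',
    show A.mulVecLin = Matrix.toLin' A from rfl, LinearMap.toMatrix'_toLin']

lemma trace_funLeft_perm {ι : Type*} [Fintype ι] [DecidableEq ι] (σ : Equiv.Perm ι) :
    trace ℝ (ι → ℝ) (funLeft ℝ ℝ σ) = ((Finset.univ.filter fun e => σ e = e).card : ℝ) := by
  rw [trace_eq_matrix_trace ℝ (Pi.basisFun ℝ ι), LinearMap.toMatrix_eq_toMatrix', Matrix.trace]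
  have hdiag : ∀ i : ι, (LinearMap.toMatrix' (funLeft ℝ ℝ σ)).diag i
      = if σ i = i then (1:ℝ) else 0 := by
    intro i
    rcases eq_or_ne (σ i) i with h | h <;>
      simp [Matrix.diag_apply, LinearMap.toMatrix'_apply, funLeft_apply, Pi.single_apply, h]
  rw [Finset.sum_congr rfl fun i _ => hdiag i, Finset.sum_ite, Finset.sum_const,
    Finset.sum_const_zero, add_zero, nsmul_eq_mul, mul_one]

lemma trace_block_perm {d n : ℕ} (σ : Equiv.Perm (Fin n)) (A : Matrix (Fin d) (Fin d) ℝ)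
    (f : (Fin n → Fin d → ℝ) →ₗ[ℝ] (Fin n → Fin d → ℝ))
    (hf : ∀ u i, f u i = A *ᵥ u (σ i)) :
    trace ℝ _ f = ((Finset.univ.filter fun i => σ i = i).card : ℝ) * A.trace := by
  classical
  set b := Pi.basis (fun _ : Fin n => Pi.basisFun ℝ (Fin d)) with hb
  rw [trace_eq_matrix_trace ℝ b, Matrix.trace]
  have hdiag : ∀ ji : (_ : Fin n) × Fin d,
      (LinearMap.toMatrix b b f).diag ji
        = if σ ji.1 = ji.1 then A ji.2 ji.2 else 0 := by
    rintro ⟨i, a⟩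
    simp only [Matrix.diag_apply, LinearMap.toMatrix_apply, hb, Pi.basis_repr, Pi.basis_apply]
    rw [hf]
    rcases eq_or_ne (σ i) i with h | h
    · rw [h]
      simp [Pi.basisFun_apply, mulVec, dotProduct, Pi.single_apply]
    · rw [Pi.single_eq_of_ne h]
      simp [h]
  rw [Finset.sum_congr rfl fun ji _ => hdiag ji, ← Finset.univ_sigma_univ, Finset.sum_sigma]
  have : ∀ i : Fin n, (∑ a : Fin d, if σ i = i then A a a else 0)
      = if σ i = i then A.trace else 0 := by
    intro i
    rcases eq_or_ne (σ i) i with h | h <;> simp [h, Matrix.trace, Matrix.diag]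
  rw [Finset.sum_congr rfl fun i _ => this i, Finset.sum_ite, Finset.sum_const,
    Finset.sum_const_zero, add_zero, nsmul_eq_mul]

lemma dot_mulVec_expand {d n : ℕ} (w : Fin d → ℝ) (C : Matrix (Fin d) (Fin n) ℝ) (c : Fin n → ℝ) :
    w ⬝ᵥ (C *ᵥ c) = ∑ i, c i * (w ⬝ᵥ (fun a => C a i)) := by
  simp only [dotProduct, mulVec, Finset.mul_sum]
  rw [Finset.sum_comm]
  apply Finset.sum_congr rfl
  intros; apply Finset.sum_congr rfl
  intros; ring

lemma mulVec_dot_expand {d n : ℕ} (w : Fin d → ℝ) (C : Matrix (Fin d) (Fin n) ℝ) (c : Fin n → ℝ) :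
    (C *ᵥ c) ⬝ᵥ w = ∑ i, c i * ((fun a => C a i) ⬝ᵥ w) := by
  rw [dotProduct_comm, dot_mulVec_expand]
  apply Finset.sum_congr rfl
  intros; rw [dotProduct_comm]

lemma dot_expand {d : ℕ} (a b c e : Fin d → ℝ) :
    (a - b) ⬝ᵥ (c - e) = a ⬝ᵥ c - a ⬝ᵥ e - b ⬝ᵥ c + b ⬝ᵥ e := by
  rw [sub_dotProduct, dotProduct_sub, dotProduct_sub]
  ring

lemma rigid_motion_decomp {d n : ℕ} (p u : Fin n → Fin d → ℝ) (i0 : Fin n)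
    (hspan : Submodule.span ℝ (Set.range fun i => p i - p i0) = ⊤)
    (hu : ∀ i j, (p i - p j) ⬝ᵥ (u i - u j) = 0) :
    ∃ V : Matrix (Fin d) (Fin d) ℝ, Vᵀ = -V ∧ ∃ t, ∀ i, u i = V *ᵥ p i + t := by
  classical
  set q : Fin n → Fin d → ℝ := fun i => p i - p i0 with hq
  set v : Fin n → Fin d → ℝ := fun i => u i - u i0 with hv
  have h2 : ∀ i j, q i ⬝ᵥ v j + q j ⬝ᵥ v i = 0 := by
    intro i j
    have e1 := hu i j
    have e2 := hu i i0
    have e3 := hu j i0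
    rw [dot_expand] at e1 e2 e3
    have g1 : q i ⬝ᵥ v j = p i ⬝ᵥ u j - p i ⬝ᵥ u i0 - p i0 ⬝ᵥ u j + p i0 ⬝ᵥ u i0 :=
      dot_expand (p i) (p i0) (u j) (u i0)
    have g2 : q j ⬝ᵥ v i = p j ⬝ᵥ u i - p j ⬝ᵥ u i0 - p i0 ⬝ᵥ u i + p i0 ⬝ᵥ u i0 :=
      dot_expand (p j) (p i0) (u i) (u i0)
    rw [g1, g2]
    linarith
  set A : Matrix (Fin d) (Fin n) ℝ := Matrix.of fun a i => q i a with hA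
  set B : Matrix (Fin d) (Fin n) ℝ := Matrix.of fun a i => v i a with hB
  have hAe : ∀ i, A.mulVecLin (Pi.single i 1) = q i := by
    intro i; ext a
    simp [hA, mulVecLin, mulVec, dotProduct, Pi.single_apply]
  have hBe : ∀ i, B.mulVecLin (Pi.single i 1) = v i := by
    intro i; ext a
    simp [hB, mulVecLin, mulVec, dotProduct, Pi.single_apply]
  have hBv : ∀ i, (fun a => B a i) = v i := fun _ => rfl
  have hAsurj : LinearMap.range A.mulVecLin = ⊤ := by
    rw [eq_top_iff, ← hspan, Submodule.span_le]
    rintro _ ⟨i, rfl⟩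
    exact ⟨Pi.single i 1, hAe i⟩
  have hkerAB : ∀ c, A.mulVecLin c = 0 → B.mulVecLin c = 0 := by
    intro c hc
    have hzero : ∀ y ∈ Submodule.span ℝ (Set.range fun i => p i - p i0),
        y ⬝ᵥ (B *ᵥ c) = 0 := by
      intro y hy
      induction hy using Submodule.span_induction with
      | mem y hy =>
        obtain ⟨j, rfl⟩ := hy
        show q j ⬝ᵥ (B *ᵥ c) = 0
        rw [dot_mulVec_expand]
        have hterm : ∀ i, c i * (q j ⬝ᵥ (fun a => B a i)) = -(c i * (q i ⬝ᵥ v j)) := by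
          intro i
          rw [hBv, show q j ⬝ᵥ v i = -(q i ⬝ᵥ v j) by linarith [h2 i j]]
          ring
        rw [Finset.sum_congr rfl fun i _ => hterm i, Finset.sum_neg_distrib, neg_eq_zero]
        have hAc : (A *ᵥ c) ⬝ᵥ v j = 0 := by
          rw [show A *ᵥ c = A.mulVecLin c from rfl, hc, zero_dotProduct]
        rw [mulVec_dot_expand] at hAc
        exact hAc
      | zero => simp
      | add y z _ _ hy hz => rw [add_dotProduct, hy, hz, add_zero]
      | smul a y _ hy => rw [smul_dotProduct, hy, smul_zero]
    have := hzero (B *ᵥ c) (by rw [hspan]; trivial)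
    rwa [dotProduct_self_eq_zero] at this
  obtain ⟨g, hg⟩ := A.mulVecLin.exists_rightInverse_of_surjective hAsurj
  set Vmap : (Fin d → ℝ) →ₗ[ℝ] (Fin d → ℝ) := B.mulVecLin ∘ₗ g with hVmap
  have hVq : ∀ i, Vmap (q i) = v i := by
    intro i
    have h1 : A.mulVecLin (g (q i) - Pi.single i 1) = 0 := by
      rw [map_sub, hAe]
      have h0 : A.mulVecLin (g (q i)) = q i := by
        have := LinearMap.ext_iff.mp hg (q i)
        simpa using this
      rw [h0, sub_self]
    have h2' := hkerAB _ h1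
    rw [map_sub, hBe, sub_eq_zero] at h2'
    rw [hVmap]
    simpa using h2'
  have hkey : ∀ y z : Fin d → ℝ, y ⬝ᵥ Vmap z + z ⬝ᵥ Vmap y = 0 := by
    have main : ∀ y ∈ Submodule.span ℝ (Set.range fun i => p i - p i0),
        ∀ z ∈ Submodule.span ℝ (Set.range fun i => p i - p i0),
        y ⬝ᵥ Vmap z + z ⬝ᵥ Vmap y = 0 := by
      intro y hy z hz
      induction hy using Submodule.span_induction with
      | mem y hy =>
        induction hz using Submodule.span_induction with
        | mem z hz =>
          obtain ⟨i, rfl⟩ := hy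
          obtain ⟨j, rfl⟩ := hz
          have h := h2 i j
          rw [← hVq i, ← hVq j] at h
          exact h
        | zero => simp
        | add z w hz hw ihz ihw =>
          rw [map_add, dotProduct_add, add_dotProduct]
          linarith
        | smul a z hz ihz =>
          rw [_root_.map_smul]
          simp only [dotProduct_smul, smul_dotProduct, smul_eq_mul]
          linear_combination a * ihz
      | zero => simp
      | add y w hy hw ihy ihw =>
        rw [map_add, dotProduct_add, add_dotProduct]
        linarith
      | smul a y hy ihy =>
        rw [_root_.map_smul]
        simp only [dotProduct_smul, smul_dotProduct, smul_eq_mul]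
        linear_combination a * ihy
    intro y z
    exact main y (by rw [hspan]; trivial) z (by rw [hspan]; trivial)
  have hV : ∀ y, (LinearMap.toMatrix' Vmap) *ᵥ y = Vmap y := by
    intro y
    rw [show (LinearMap.toMatrix' Vmap) *ᵥ y = Matrix.toLin' (LinearMap.toMatrix' Vmap) y
      from rfl, Matrix.toLin'_toMatrix']
  refine ⟨LinearMap.toMatrix' Vmap, ?_, u i0 - (LinearMap.toMatrix' Vmap) *ᵥ p i0, ?_⟩
  · ext a b
    have h1 : (LinearMap.toMatrix' Vmap) a b = (Vmap (Pi.single b 1)) a := by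
      rw [← hV]; simp [mulVec, dotProduct, Pi.single_apply]
    have h2' : (LinearMap.toMatrix' Vmap) b a = (Vmap (Pi.single a 1)) b := by
      rw [← hV]; simp [mulVec, dotProduct, Pi.single_apply]
    have hk := hkey (Pi.single a 1) (Pi.single b 1)
    rw [single_dotProduct, single_dotProduct] at hk
    simp only [one_mul] at hk
    rw [Matrix.transpose_apply, Matrix.neg_apply, h1, h2']
    linarith
  · intro i
    have hui : u i = v i + u i0 := by simp [hv]
    rw [hui, ← hVq i, ← hV, hq]
    simp only [Matrix.mulVec_sub, hV]
    rw [show Vmap (p i - p i0) = Vmap (p i) - Vmap (p i0) from map_sub _ _ _]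
    abel

open Matrix



/-- symmetry-extended Maxwell rule: for an isostatic symmetric framework
`(G,p)` in `ℝ^d` whose joints affinely span `ℝ^d`, for every `x ∈ S`:
`j_{Φ(x)} · Tr(M_x) − Tr(M_x) − χ_R(x) = b_{Φ(x)}`, where `χ_R(x)` is the trace of the
action of `H_e(x)` on the space `R` of rotational infinitesimal rigid motions, and
`j_{Φ(x)}`, `b_{Φ(x)}` are the numbers of vertices and edges fixed by `Φ(x)`. -/
theorem symmetry_extended_maxwell_rule
    {d n : ℕ} (G : SimpleGraph (Fin n)) [Fintype G.edgeSet] [DecidableEq G.edgeSet]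
    {S : Type*} [Group S] [Finite S]
    (M : S →* Matrix (Fin d) (Fin d) ℝ)
    (hM : ∀ x : S, (M x)ᵀ * M x = 1)
    (Φ : S →* (G ≃g G))
    (p : Fin n → Fin d → ℝ)
    (hp : ∀ (x : S) (i : Fin n), M x *ᵥ p i = p (Φ x i))
    (hspan : affineSpan ℝ (Set.range p) = ⊤)
    -- the external representation:
    (ρe : Representation ℝ S (Fin n → Fin d → ℝ))
    (hρe : ∀ (x : S) (u : Fin n → Fin d → ℝ) (i : Fin n),
      ρe x u i = M x *ᵥ u ((Φ x).symm i))
    -- the rigidity matrix of `(G,p)` as a linear map: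
    (Rmap : (Fin n → Fin d → ℝ) →ₗ[ℝ] (G.edgeSet → ℝ))
    (hR : ∀ (u : Fin n → Fin d → ℝ) (i j : Fin n) (hij : G.Adj i j),
      Rmap u ⟨s(i, j), G.mem_edgeSet.mpr hij⟩ = (p i - p j) ⬝ᵥ (u i - u j))
    -- the space `N` of infinitesimal rigid motions:
    (N : Submodule ℝ (Fin n → Fin d → ℝ))
    (hN : ∀ u, u ∈ N ↔ ∀ i j : Fin n, (p i - p j) ⬝ᵥ (u i - u j) = 0)
    -- `(G,p)` is isostatic:
    (hker : LinearMap.ker Rmap = N)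
    (hsurj : Function.Surjective Rmap)
    -- the space `R` of rotational infinitesimal rigid motions, with its `H_e`-action:
    (Rot : Submodule ℝ (Fin n → Fin d → ℝ))
    (hRot : ∀ r, r ∈ Rot ↔
      ∃ V : Matrix (Fin d) (Fin d) ℝ, Vᵀ = -V ∧ ∀ i, r i = V *ᵥ p i)
    (hRotInv : RepInvariant ρe Rot)
    (x : S) :
    ((Finset.univ.filter fun i : Fin n => Φ x i = i).card : ℝ) * (M x).trace
        - (M x).trace
        - LinearMap.trace ℝ Rot ((ρe x).restrict (hRotInv x))
      = ((Finset.univ.filter fun e : G.edgeSet => (Φ x).mapEdgeSet e = e).card : ℝ) := by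

  classical
  -- nonempty vertex set
  have hne : Nonempty (Fin n) := by
    by_contra h
    rw [not_nonempty_iff] at h
    rw [Set.range_eq_empty p] at hspan
    simp at hspan
  obtain ⟨i0⟩ := hne
  -- span of differences is everything
  have hspan' : Submodule.span ℝ (Set.range fun i => p i - p i0) = ⊤ := by
    have h1 := vectorSpan_range_eq_span_range_vsub_right ℝ p i0
    have h2 : vectorSpan ℝ (Set.range p) = ⊤ := by
      rw [← direction_affineSpan, hspan]
      exact AffineSubspace.direction_top ℝ _ _
    rw [h1] at h2
    exact h2
  -- orthogonality of M x
  have horth : ∀ a b : Fin d → ℝ, (M x *ᵥ a) ⬝ᵥ (M x *ᵥ b) = a ⬝ᵥ b := by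
    intro a b
    rw [Matrix.dotProduct_mulVec]
    congr 1
    rw [show M x *ᵥ a = a ᵥ* (M x)ᵀ from (Matrix.vecMul_transpose _ _).symm,
      Matrix.vecMul_vecMul, hM, Matrix.vecMul_one]
  -- hp in symm form
  have hps : ∀ i : Fin n, M x *ᵥ p ((Φ x).symm i) = p i := by
    intro i
    rw [hp x ((Φ x).symm i)]
    exact congrArg p ((Φ x).apply_symm_apply i)
  -- N is invariant
  have hNinv : ∀ v ∈ N, ρe x v ∈ N := by
    intro v hv
    rw [hN] at hv ⊢
    intro i j
    have : p i - p j = M x *ᵥ (p ((Φ x).symm i) - p ((Φ x).symm j)) := by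
      rw [Matrix.mulVec_sub, hps, hps]
    rw [this, hρe, hρe, show M x *ᵥ v ((Φ x).symm i) - M x *ᵥ v ((Φ x).symm j)
      = M x *ᵥ (v ((Φ x).symm i) - v ((Φ x).symm j)) by rw [Matrix.mulVec_sub], horth]
    exact hv _ _
  -- Rot ≤ N
  have hRotN : Rot ≤ N := by
    intro r hr
    rw [hRot] at hr
    obtain ⟨V, hVskew, hrV⟩ := hr
    rw [hN]
    intro i j
    have h1 : r i - r j = V *ᵥ (p i - p j) := by rw [hrV, hrV, Matrix.mulVec_sub]
    rw [h1]
    -- a ⬝ᵥ V *ᵥ a = 0 for skew V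
    set a := p i - p j
    have h2 : a ᵥ* V = -(V *ᵥ a) := by
      have : V = ((Vᵀ)ᵀ) := by rw [Matrix.transpose_transpose]
      rw [this, Matrix.vecMul_transpose, Matrix.transpose_transpose, hVskew,
        Matrix.neg_mulVec]
    have h3 : a ⬝ᵥ (V *ᵥ a) = -(a ⬝ᵥ (V *ᵥ a)) := by
      conv_lhs => rw [Matrix.dotProduct_mulVec, h2]
      rw [neg_dotProduct, dotProduct_comm]
    linarith
  -- STEP A : total trace
  have hfA : ∀ u (i : Fin n), ρe x u i = M x *ᵥ u ((Φ x).toEquiv.symm i) :=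
    fun u i => hρe x u i
  have htotal : trace ℝ _ ((ρe x : (Fin n → Fin d → ℝ) →ₗ[ℝ] (Fin n → Fin d → ℝ)))
      = ((Finset.univ.filter fun i : Fin n => Φ x i = i).card : ℝ) * (M x).trace := by
    rw [trace_block_perm ((Φ x).toEquiv.symm) (M x) (ρe x) hfA]
    congr 2
    refine congrArg Finset.card (Finset.filter_congr fun i _ => ?_)
    constructor
    · intro h
      conv_lhs => rw [← h]
      exact (Φ x).apply_symm_apply i
    · intro h
      conv_lhs => rw [← h]
      exact (Φ x).symm_apply_apply i
  -- STEP B : split along N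
  have hsplit1 := trace_restrict_add_mapQ (ρe x) N hNinv
  -- STEP C : the quotient trace equals the number of fixed edges
  set τ : G.edgeSet ≃ G.edgeSet := SimpleGraph.Iso.mapEdgeSet (Φ x) with hτdef
  set P : (G.edgeSet → ℝ) →ₗ[ℝ] (G.edgeSet → ℝ) :=
    funLeft ℝ ℝ (τ.symm : G.edgeSet → G.edgeSet) with hPdef
  have hinter : ∀ u, Rmap (ρe x u) = P (Rmap u) := by
    intro u
    funext e
    rcases e with ⟨e', he⟩
    induction e' using Sym2.ind with
    | _ i j =>
      have hij : G.Adj i j := G.mem_edgeSet.mp he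
      have hadj2 : G.Adj ((Φ x).symm i) ((Φ x).symm j) :=
        ((Φ x).symm).map_adj_iff.mpr hij
      have hLHS : Rmap (ρe x u) ⟨s(i,j), he⟩
          = (p i - p j) ⬝ᵥ (ρe x u i - ρe x u j) := hR (ρe x u) i j hij
      have hτs : τ.symm ⟨s(i,j), he⟩
          = ⟨s((Φ x).symm i, (Φ x).symm j), G.mem_edgeSet.mpr hadj2⟩ := by
        apply Subtype.ext
        show Sym2.map ((Φ x).symm) s(i,j) = s((Φ x).symm i, (Φ x).symm j)
        exact Sym2.map_pair_eq _ i j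
      have hRHS : P (Rmap u) ⟨s(i,j), he⟩
          = (p ((Φ x).symm i) - p ((Φ x).symm j))
            ⬝ᵥ (u ((Φ x).symm i) - u ((Φ x).symm j)) := by
        rw [hPdef]
        show (Rmap u) (τ.symm ⟨s(i,j), he⟩) = _
        rw [hτs]
        exact hR u _ _ hadj2
      rw [hLHS, hRHS]
      rw [hρe, hρe, show M x *ᵥ u ((Φ x).symm i) - M x *ᵥ u ((Φ x).symm j)
        = M x *ᵥ (u ((Φ x).symm i) - u ((Φ x).symm j)) by rw [Matrix.mulVec_sub],
        show p i - p j = M x *ᵥ (p ((Φ x).symm i) - p ((Φ x).symm j)) by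
          rw [Matrix.mulVec_sub, hps, hps], horth]
  have hle : N ≤ LinearMap.ker Rmap := le_of_eq hker.symm
  set Rbar : ((Fin n → Fin d → ℝ) ⧸ N) →ₗ[ℝ] (G.edgeSet → ℝ) := N.liftQ Rmap hle with hRbar
  have hbij : Function.Bijective Rbar := by
    constructor
    · rw [← LinearMap.ker_eq_bot]
      exact Submodule.ker_liftQ_eq_bot' N Rmap hker.symm
    · rw [← LinearMap.range_eq_top, hRbar, Submodule.range_liftQ]
      exact LinearMap.range_eq_top.mpr hsurj
  set ebar := LinearEquiv.ofBijective Rbar hbij with hebar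
  set mq := N.mapQ N (ρe x) (fun v hv => hNinv v hv) with hmq
  have hconj : ebar.conj mq = P := by
    apply LinearMap.ext
    intro w
    obtain ⟨vq, rfl⟩ := ebar.surjective w
    obtain ⟨vv, rfl⟩ := Submodule.Quotient.mk_surjective N vq
    rw [LinearEquiv.conj_apply]
    simp only [coe_comp, Function.comp_apply, LinearEquiv.coe_coe, LinearEquiv.symm_apply_apply]
    have h1 : mq (Submodule.Quotient.mk vv) = Submodule.Quotient.mk (ρe x vv) :=
      Submodule.mapQ_apply _ _ _ _
    have h2 : ∀ v : Fin n → Fin d → ℝ, ebar (Submodule.Quotient.mk v) = Rmap v := by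
      intro v
      show Rbar (Submodule.Quotient.mk v) = Rmap v
      exact Submodule.liftQ_apply _ _ _
    rw [h1, h2, h2, hinter]
  have hquot : trace ℝ _ mq
      = ((Finset.univ.filter fun e : G.edgeSet => (Φ x).mapEdgeSet e = e).card : ℝ) := by
    rw [← LinearMap.trace_conj' mq ebar, hconj, hPdef]
    rw [trace_funLeft_perm (τ.symm)]
    refine congrArg (fun k : ℕ => (k : ℝ)) (congrArg Finset.card (Finset.filter_congr fun e _ => ?_))
    rw [Equiv.symm_apply_eq, eq_comm]
  -- STEP D : split the restriction to N into rotations and translations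
  set fN : N →ₗ[ℝ] N := (ρe x).restrict hNinv with hfN
  set Rot' : Submodule ℝ N := Rot.comap N.subtype with hRot'
  have hRot'inv : ∀ v ∈ Rot', fN v ∈ Rot' := by
    rintro ⟨v, hvN⟩ hv
    have hvR : v ∈ Rot := hv
    exact hRotInv x v hvR
  have hsplit2 := trace_restrict_add_mapQ fN Rot' hRot'inv
  -- D1 : the trace on Rot' equals the trace on Rot
  set eR : Rot' ≃ₗ[ℝ] Rot := Submodule.comapSubtypeEquivOfLe hRotN with heR
  have hD1 : trace ℝ Rot' (fN.restrict hRot'inv) = trace ℝ Rot ((ρe x).restrict (hRotInv x)) := by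
    have hc := LinearMap.trace_conj' (R := ℝ) (M := ↥Rot') (N := ↥Rot) (fN.restrict hRot'inv) eR
    rw [← hc]
    congr 1
  -- D2 : the trace on N ⧸ Rot' equals the trace of M x
  have hconstmem : ∀ t : Fin d → ℝ,
      (LinearMap.pi fun _ : Fin n => (LinearMap.id : (Fin d → ℝ) →ₗ[ℝ] (Fin d → ℝ))) t ∈ N := by
    intro t
    rw [hN]
    intro i j
    show (p i - p j) ⬝ᵥ (t - t) = 0
    simp
  set constN : (Fin d → ℝ) →ₗ[ℝ] N :=
    (LinearMap.pi fun _ : Fin n => (LinearMap.id : (Fin d → ℝ) →ₗ[ℝ] (Fin d → ℝ))).codRestrict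
      N hconstmem with hconstN
  set ψ0 : (Fin d → ℝ) →ₗ[ℝ] (N ⧸ Rot') := (Rot'.mkQ).comp constN with hψ0
  have hψ0val : ∀ t, ((constN t : N) : Fin n → Fin d → ℝ) = fun _ => t := fun t => rfl
  have hψbij : Function.Bijective ψ0 := by
    constructor
    · intro t1 t2 h12
      have hz : ψ0 (t1 - t2) = 0 := by rw [map_sub, h12, sub_self]
      have hmem : constN (t1 - t2) ∈ Rot' := by
        rwa [hψ0, LinearMap.comp_apply, Submodule.mkQ_apply, Submodule.Quotient.mk_eq_zero] at hz
      have hmemR : ((constN (t1 - t2) : N) : Fin n → Fin d → ℝ) ∈ Rot := hmem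
      rw [hRot] at hmemR
      obtain ⟨V, hVs, hVt⟩ := hmemR
      have hVt' : ∀ i : Fin n, t1 - t2 = V *ᵥ p i := by
        intro i
        have := hVt i
        rwa [hψ0val] at this
      have hVz : ∀ y ∈ Submodule.span ℝ (Set.range fun i => p i - p i0), V *ᵥ y = 0 := by
        intro y hy
        induction hy using Submodule.span_induction with
        | mem y hy =>
          obtain ⟨i, rfl⟩ := hy
          show V *ᵥ (p i - p i0) = 0
          rw [Matrix.mulVec_sub, ← hVt' i, ← hVt' i0, sub_self]
        | zero => simp
        | add y z _ _ hy hz => rw [Matrix.mulVec_add, hy, hz, add_zero]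
        | smul a y _ hy => rw [Matrix.mulVec_smul, hy, smul_zero]
      have ht : t1 - t2 = 0 := by
        rw [hVt' i0]
        exact hVz (p i0) (by rw [hspan']; trivial)
      exact sub_eq_zero.mp ht
    · intro w
      obtain ⟨nq, rfl⟩ := Submodule.Quotient.mk_surjective Rot' w
      obtain ⟨V, hVs, t, hVt⟩ :=
        rigid_motion_decomp p (nq : Fin n → Fin d → ℝ) i0 hspan' ((hN _).mp nq.2)
      refine ⟨t, ?_⟩
      rw [hψ0, LinearMap.comp_apply, Submodule.mkQ_apply, Submodule.Quotient.eq]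
      have : ((constN t - nq : N) : Fin n → Fin d → ℝ) ∈ Rot := by
        rw [hRot]
        refine ⟨-V, by rw [Matrix.transpose_neg, hVs, neg_neg], ?_⟩
        intro i
        show (constN t : Fin n → Fin d → ℝ) i - (nq : Fin n → Fin d → ℝ) i = (-V) *ᵥ p i
        rw [hψ0val, hVt i, Matrix.neg_mulVec]
        abel
      exact this
  set ψ : (Fin d → ℝ) ≃ₗ[ℝ] (N ⧸ Rot') := LinearEquiv.ofBijective ψ0 hψbij with hψ
  set mq2 := Rot'.mapQ Rot' fN (fun v hv => hRot'inv v hv) with hmq2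
  have hcomm : ∀ t, mq2 (ψ0 t) = ψ0 (M x *ᵥ t) := by
    intro t
    rw [hψ0, LinearMap.comp_apply, Submodule.mkQ_apply, Submodule.mapQ_apply]
    rw [LinearMap.comp_apply, Submodule.mkQ_apply]
    congr 1
    apply Subtype.ext
    funext i
    show (ρe x) ((constN t : N) : Fin n → Fin d → ℝ) i = _
    rw [hρe]
    rfl
  have hD2 : trace ℝ (N ⧸ Rot') mq2 = (M x).trace := by
    have hc := LinearMap.trace_conj' ((M x).mulVecLin) ψ
    rw [← trace_mulVecLin (M x), ← hc]
    congr 1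
    apply LinearMap.ext
    intro w
    obtain ⟨t, rfl⟩ := ψ.surjective w
    rw [LinearEquiv.conj_apply]
    simp only [coe_comp, Function.comp_apply, LinearEquiv.coe_coe, LinearEquiv.symm_apply_apply]
    exact hcomm t
  -- assemble
  linarith [htotal, hsplit1, hsplit2, hD1, hD2, hquot]
end
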